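/- Let ℓ ≥ 2 and let W be a P_ℓ-witness structure of a finite simple graph G with W(p_1) = {x} and W(p_ℓ) = {y}. If a vertex z of G satisfies d_G(x, z) = i and d_G(y, z) = ℓ − 1 − i for some 0 ≤ i ≤ ℓ − 1, then z ∈ W(p_{i+1}). -/
import Mathlib


/-- `W` is an `H`-witness structure of `G`: a family of pairwise disjoint nonempty
connected subsets of `V(G)` covering `V(G)` such that distinct `h₁ h₂` are adjacent in `H`
iff there is an edge of `G` between `W h₁` and `W h₂`. -/
def IsWitnessStructure {V U : Type*} (G : SimpleGraph V) (H : SimpleGraph U)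
    (W : U → Set V) : Prop :=
  (∀ h, (W h).Nonempty) ∧
  (∀ h₁ h₂, h₁ ≠ h₂ → Disjoint (W h₁) (W h₂)) ∧
  (⋃ h, W h) = Set.univ ∧
  (∀ h, (G.induce (W h)).Connected) ∧
  (∀ h₁ h₂, h₁ ≠ h₂ → ((∃ a ∈ W h₁, ∃ b ∈ W h₂, G.Adj a b) ↔ H.Adj h₁ h₂))

/-- `G` contains `H` as a contraction. -/
def ContainsAsContraction {V U : Type*} (G : SimpleGraph V) (H : SimpleGraph U) : Prop :=
  ∃ W : U → Set V, IsWitnessStructure G H W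

section Aux

variable {V : Type} (G : SimpleGraph V) {ℓ : ℕ} (W : Fin ℓ → Set V)
  (hW : IsWitnessStructure G (SimpleGraph.pathGraph ℓ) W)
include hW

/-- Reachability within a bag. -/
lemma aux_bag_reachable (h : Fin ℓ) {a b : V} (ha : a ∈ W h) (hb : b ∈ W h) :
    G.Reachable a b := by
  have hc := (hW.2.2.2.1 h) ⟨a, ha⟩ ⟨b, hb⟩
  exact hc.map (SimpleGraph.Embedding.induce (W h)).toHom

/-- Edge step: adjacent vertices lie in bags at distance ≤ 1. -/
lemma aux_edge_step {a b : V} {j k : Fin ℓ} (ha : a ∈ W j) (hb : b ∈ W k)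
    (hab : G.Adj a b) : (j : ℕ) ≤ k + 1 ∧ (k : ℕ) ≤ j + 1 := by
  by_cases hjk : j = k
  · subst hjk; omega
  · have := (hW.2.2.2.2 j k hjk).mp ⟨a, ha, b, hb, hab⟩
    rw [SimpleGraph.pathGraph_adj] at this
    omega

/-- Walk bound: any walk between bags `j` and `k` has length ≥ |j - k|. -/
lemma aux_walk_bound {a b : V} (p : G.Walk a b) :
    ∀ {j k : Fin ℓ}, a ∈ W j → b ∈ W k →
      (j : ℕ) ≤ k + p.length ∧ (k : ℕ) ≤ j + p.length := by
  induction p with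
  | nil =>
    intro j k ha hb
    have : j = k := by
      by_contra hne
      exact (hW.2.1 j k hne).ne_of_mem ha hb rfl
    subst this; simp
  | @cons u v w huv q ih =>
    intro j k ha hb
    obtain ⟨m, hm⟩ : ∃ m : Fin ℓ, v ∈ W m := by
      have : v ∈ ⋃ h, W h := hW.2.2.1 ▸ Set.mem_univ v
      simpa using this
    have h1 := aux_edge_step G W hW ha hm huv
    have h2 := ih hm hb
    simp only [SimpleGraph.Walk.length_cons]
    omega

end Aux

theorem stmt_3 {V : Type} [Fintype V] (G : SimpleGraph V) (ℓ : ℕ) (hℓ : 2 ≤ ℓ)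
    (W : Fin ℓ → Set V) (hW : IsWitnessStructure G (SimpleGraph.pathGraph ℓ) W)
    (x y : V) (hx : W ⟨0, by omega⟩ = {x}) (hy : W ⟨ℓ - 1, by omega⟩ = {y})
    (z : V) (i : ℕ) (hi : i ≤ ℓ - 1)
    (hzx : G.dist x z = i) (hzy : G.dist y z = ℓ - 1 - i) :
    z ∈ W ⟨i, by omega⟩ := by
  classical
  -- bag of z
  obtain ⟨j, hj⟩ : ∃ j : Fin ℓ, z ∈ W j := by
    have : z ∈ ⋃ h, W h := hW.2.2.1 ▸ Set.mem_univ z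
    simpa using this
  have hxmem : x ∈ W ⟨0, by omega⟩ := by rw [hx]; rfl
  have hymem : y ∈ W ⟨ℓ - 1, by omega⟩ := by rw [hy]; rfl
  -- x is reachable from every vertex: chain along bags
  have hchain : ∀ m : ℕ, ∀ hm : m < ℓ, ∀ v ∈ W ⟨m, hm⟩, G.Reachable x v := by
    intro m
    induction m with
    | zero =>
      intro hm v hv
      exact aux_bag_reachable G W hW _ hxmem hv
    | succ n ih =>
      intro hm v hv
      have hn : n < ℓ := by omega
      have hadj : (SimpleGraph.pathGraph ℓ).Adj ⟨n, hn⟩ ⟨n + 1, hm⟩ := by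
        rw [SimpleGraph.pathGraph_adj]; left; rfl
      have hne : (⟨n, hn⟩ : Fin ℓ) ≠ ⟨n + 1, hm⟩ := by
        intro h; simpa using congrArg Fin.val h
      obtain ⟨a, ha, b, hb, hab⟩ := (hW.2.2.2.2 _ _ hne).mpr hadj
      exact ((ih hn a ha).trans hab.reachable).trans
        (aux_bag_reachable G W hW _ hb hv)
  have hxz : G.Reachable x z := hchain j.val j.isLt z hj
  have hyz : G.Reachable y z :=
    (hchain (ℓ - 1) (by omega) y hymem).symm.trans hxz
  obtain ⟨p, hp⟩ := hxz.exists_walk_length_eq_dist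
  obtain ⟨q, hq⟩ := hyz.exists_walk_length_eq_dist
  have h1 := aux_walk_bound G W hW p hxmem hj
  have h2 := aux_walk_bound G W hW q hymem hj
  rw [hp, hzx] at h1
  rw [hq, hzy] at h2
  simp only [Fin.val_mk] at h1 h2
  have hji : (j : ℕ) = i := by omega
  have : j = ⟨i, by omega⟩ := Fin.ext hji
  exact this ▸ hj
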